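/- Let Σ be a d × d diagonal complex matrix with strictly positive real diagonal entries. If for every unitary d × d matrix U the matrix Σ * Uᵀ * Σ⁻¹ is unitary, then there exists a positive real constant c such that Σ = c • 1. -/

import Mathlib

namespace Matrix

variable {n : Type*} [Fintype n] [DecidableEq n]

theorem permMatrix_mem_unitaryGroup {𝕜 : Type*} [CommRing 𝕜] [StarRing 𝕜] (e : Equiv.Perm n) :
    e.permMatrix 𝕜 ∈ unitaryGroup n 𝕜 := by
  rw [mem_unitaryGroup_iff', star_eq_conjTranspose, conjTranspose_permMatrix, ← permMatrix_mul,
    mul_inv_cancel, permMatrix_one]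

theorem inv_diagonal_of_ne_zero {K : Type*} [Field K] {v : n → K} (hv : ∀ i, v i ≠ 0) :
    (diagonal v)⁻¹ = diagonal fun i => (v i)⁻¹ := by
  refine inv_eq_right_inv ?_
  rw [diagonal_mul_diagonal, ← diagonal_one]
  exact congrArg diagonal (funext fun i => mul_inv_cancel₀ (hv i))

theorem diagonal_mul_mul_inv_diagonal_apply {K : Type*} [Field K] {v : n → K}
    (hv : ∀ i, v i ≠ 0) (M : Matrix n n K) (i j : n) :
    (diagonal v * M * (diagonal v)⁻¹) i j = v i * M i j / v j := by
  rw [inv_diagonal_of_ne_zero hv, mul_diagonal, diagonal_mul, div_eq_mul_inv]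

theorem norm_eq_of_forall_diagonal_mul_transpose_mul_inv_mem_unitaryGroup {𝕜 : Type*} [RCLike 𝕜]
    {v : n → 𝕜} (hv : ∀ i, v i ≠ 0)
    (h : ∀ U ∈ unitaryGroup n 𝕜, diagonal v * Uᵀ * (diagonal v)⁻¹ ∈ unitaryGroup n 𝕜)
    (i j : n) : ‖v i‖ = ‖v j‖ := by
  suffices hle : ∀ k l, ‖v k‖ ≤ ‖v l‖ from le_antisymm (hle i j) (hle j i)
  intro k l
  -- The transposed swap matrix has a `1` at `(k, l)`, so the `(k, l)` entry of the conjugate is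
  -- `v k / v l`, and entries of unitary matrices have norm at most `1`.
  have hentry := entry_norm_bound_of_unitary
    (h _ (permMatrix_mem_unitaryGroup (Equiv.swap k l))) k l
  rw [diagonal_mul_mul_inv_diagonal_apply hv] at hentry
  simpa [norm_div, div_le_one (norm_pos_iff.mpr (hv l))] using hentry

end Matrix

open Matrix

/-- If `S` is diagonal with strictly positive real diagonal entries and
`S * Uᵀ * S⁻¹` is unitary for every unitary `U`, then `S` is a positive multiple of the
identity (Schur's first lemma argument). -/
theorem related_unitary_for_all_unitaries_implies_scalar
    {d : ℕ} (σ : Fin d → ℝ) (hσ : ∀ i, 0 < σ i)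
    (S : Matrix (Fin d) (Fin d) ℂ) (hS : S = Matrix.diagonal (fun i => (σ i : ℂ)))
    (h : ∀ U ∈ Matrix.unitaryGroup (Fin d) ℂ,
        S * Uᵀ * S⁻¹ ∈ Matrix.unitaryGroup (Fin d) ℂ) :
    ∃ c : ℝ, 0 < c ∧ S = (c : ℂ) • (1 : Matrix (Fin d) (Fin d) ℂ) := by
  subst hS
  rcases isEmpty_or_nonempty (Fin d) with _ | hnonempty
  · exact ⟨1, one_pos, Subsingleton.elim _ _⟩
  obtain ⟨i₀⟩ := hnonempty
  have hσ_const : ∀ i, σ i = σ i₀ := fun i => by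
    simpa [abs_of_pos (hσ _)] using
      norm_eq_of_forall_diagonal_mul_transpose_mul_inv_mem_unitaryGroup
        (fun k => Complex.ofReal_ne_zero.mpr (hσ k).ne') h i i₀
  refine ⟨σ i₀, hσ i₀, ?_⟩
  rw [smul_one_eq_diagonal]
  simp only [hσ_const]
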